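/- arXiv:2502.06489 — 7 statements merged into one kernel-verified Lean document; each statement's English description precedes it below -/
import Mathlib

section
/- Let m ≥ 3 and let n be a positive multiple of m−1. Label the m candidates a_1, …, a_{m−1}, o and partition the n voters into m−1 sets S_1, …, S_{m−1}, each of size n/(m−1). Let σ be an ordinal profile in which, for each ℓ, every voter in S_ℓ ranks a_ℓ first and o second (and the remaining candidates arbitrarily). Then for every candidate w: (a) if w = o, there exists a unit-sum valuation profile v consistent with σ such that SW(o|v) = 0 and SW(a_1|v) > 0; and (b) if w = a_ℓ for some ℓ, there exists a unit-sum valuation profile v consistent with σ such that o maximizes SW(·|v) over all candidates and SW(o|v) ≥ (m(m−2)/2)·SW(a_ℓ|v). (This shows that, given the optimal candidate as prediction, no mechanism simultaneously achieves consistency o(m²) and bounded robustness.) -/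
open Finset

/-- Social welfare of candidate `x` under valuation profile `v`. -/
noncomputable def SW {n m : ℕ} (v : Fin n → Fin m → ℝ) (x : Fin m) : ℝ := ∑ i, v i x

/-- `v` is a valuation profile with nonnegative values summing to `1` for each voter. -/
def UnitSum {n m : ℕ} (v : Fin n → Fin m → ℝ) : Prop :=
  (∀ i x, 0 ≤ v i x) ∧ ∀ i, ∑ x, v i x = 1

/-- `σ i p` is the candidate ranked at position `p` by voter `i` (position `0` is the top);
`v` is consistent with `σ` if each voter's values are non-increasing along her ranking. -/
def Consistent {n m : ℕ} (σ : Fin n → (Fin m ≃ Fin m)) (v : Fin n → Fin m → ℝ) : Prop :=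
  ∀ i, ∀ p q : Fin m, p ≤ q → v i (σ i q) ≤ v i (σ i p)

/-- Given the optimal candidate as prediction, no mechanism simultaneously achieves
consistency `o(m²)` and bounded robustness: the underlying instance. -/
theorem stmt0 (m n : ℕ) (hm : 3 ≤ m) (hn : 0 < n) (hdvd : (m - 1) ∣ n)
    (o : Fin m) (a : Fin (m - 1) → Fin m) (ha : Function.Injective a)
    (hao : ∀ ℓ, a ℓ ≠ o)
    (S : Fin n → Fin (m - 1))
    (hS : ∀ ℓ, (Finset.univ.filter (fun i => S i = ℓ)).card = n / (m - 1))
    (σ : Fin n → (Fin m ≃ Fin m))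
    (hσ1 : ∀ i, σ i ⟨0, by omega⟩ = a (S i))
    (hσ2 : ∀ i, σ i ⟨1, by omega⟩ = o) :
    ∀ w : Fin m,
      (w = o → ∃ v : Fin n → Fin m → ℝ, UnitSum v ∧ Consistent σ v ∧
        SW v o = 0 ∧ 0 < SW v (a ⟨0, by omega⟩)) ∧
      (∀ ℓ : Fin (m - 1), w = a ℓ → ∃ v : Fin n → Fin m → ℝ, UnitSum v ∧ Consistent σ v ∧
        (∀ x, SW v x ≤ SW v o) ∧
        ((m : ℝ) * ((m : ℝ) - 2) / 2) * SW v (a ℓ) ≤ SW v o) := by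
  intro w
  have hNn : (m - 1) * (n / (m - 1)) = n := Nat.mul_div_cancel' hdvd
  have hNpos : 0 < n / (m - 1) := Nat.div_pos (Nat.le_of_dvd hn hdvd) (by omega)
  have hmR : (0:ℝ) < (m:ℝ) := by exact_mod_cast (by omega : 0 < m)
  constructor
  · -- part (a)
    intro _
    refine ⟨fun i x => if x = a (S i) then 1 else 0, ⟨?_, ?_⟩, ?_, ?_, ?_⟩
    · intro i x; dsimp only; split_ifs <;> norm_num
    · intro i; simp
    · intro i p q hpq
      dsimp only
      by_cases hq : σ i q = a (S i)
      · have hq0 : q = ⟨0, by omega⟩ := (σ i).injective (by rw [hq, hσ1 i])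
        have hp0 : p = ⟨0, by omega⟩ := by
          apply Fin.ext
          have := Fin.le_def.mp hpq
          simp [hq0] at this ⊢
          omega
        rw [hp0, hq0]
      · simp only [hq, if_false]
        split_ifs <;> norm_num
    · apply Finset.sum_eq_zero
      intro i _
      simp [Ne.symm (hao (S i))]
    · apply Finset.sum_pos'
      · intro i _; dsimp only; split_ifs <;> norm_num
      · have hcard : (Finset.univ.filter (fun i => S i = ⟨0, by omega⟩)).Nonempty := by
          rw [← Finset.card_pos, hS]
          exact hNpos
        obtain ⟨i0, hi0⟩ := hcard
        simp only [Finset.mem_filter, Finset.mem_univ, true_and] at hi0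
        exact ⟨i0, Finset.mem_univ i0, by simp [hi0]⟩
  · -- part (b)
    intro ℓ _
    set v : Fin n → Fin m → ℝ := fun i x =>
      if S i = ℓ then ((m:ℝ))⁻¹
      else ((if x = a (S i) then 1/2 else 0) + (if x = o then 1/2 else 0)) with hv
    have hvnn : ∀ i x, 0 ≤ v i x := by
      intro i x; rw [hv]; dsimp only; split_ifs <;> positivity
    have hvle : ∀ i x, v i x ≤ v i o := by
      intro i x
      by_cases h : S i = ℓ
      · have hx : v i x = v i o := by simp [hv, h]
        rw [hx]
      · have hne2 : ¬ (o = a (S i)) := Ne.symm (hao (S i))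
        have hvo : v i o = 1/2 := by simp [hv, h, hne2]
        rw [hvo, hv]; dsimp only
        rw [if_neg h]
        split_ifs <;> norm_num
        exact (hao (S i)) (by rw [← ‹x = a (S i)›, ‹x = o›])
    refine ⟨v, ⟨hvnn, ?_⟩, ?_, ?_, ?_⟩
    · intro i
      rw [hv]; dsimp only
      by_cases h : S i = ℓ
      · simp [h, Finset.card_univ]
        field_simp
      · simp only [h, if_false]
        rw [Finset.sum_add_distrib]
        rw [Finset.sum_ite_eq' Finset.univ (a (S i)) (fun _ => (1:ℝ)/2)]
        rw [Finset.sum_ite_eq' Finset.univ o (fun _ => (1:ℝ)/2)]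
        simp; norm_num
    · -- consistent
      intro i p q hpq
      by_cases h : S i = ℓ
      · simp [hv, h]
      · rw [hv]; dsimp only
        simp only [h, if_false]
        by_cases hq1 : σ i q = a (S i)
        · have hq0 : q = ⟨0, by omega⟩ := (σ i).injective (by rw [hq1, hσ1 i])
          have hp0 : p = ⟨0, by omega⟩ := by
            apply Fin.ext
            have := Fin.le_def.mp hpq
            simp [hq0] at this ⊢
            omega
          rw [hp0, hq0]
        · by_cases hq2 : σ i q = o
          · have hq0 : q = ⟨1, by omega⟩ := (σ i).injective (by rw [hq2, hσ2 i])
            have hple : (p : ℕ) ≤ 1 := by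
              have := Fin.le_def.mp hpq
              simp [hq0] at this; omega
            have : σ i p = a (S i) ∨ σ i p = o := by
              rcases Nat.le_one_iff_eq_zero_or_eq_one.mp hple with h0 | h1
              · left; rw [← hσ1 i]; congr 1; exact Fin.ext h0
              · right; rw [← hσ2 i]; congr 1; exact Fin.ext h1
            have hne : a (S i) ≠ o := hao (S i)
            rcases this with hp | hp <;> simp [hp, hq1, hq2, hne, Ne.symm hne]
          · simp only [hq1, hq2, if_false, add_zero]
            split_ifs <;> norm_num
    · -- o maximizes
      intro x
      exact Finset.sum_le_sum (fun i _ => hvle i x)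
    · -- ratio
      have hmemf : ∀ i ∈ Finset.univ.filter (fun i => S i = ℓ), v i (a ℓ) = ((m:ℝ))⁻¹ := by
        intro i hi
        simp only [Finset.mem_filter] at hi
        simp [hv, hi.2]
      have hmemf' : ∀ i ∈ Finset.univ.filter (fun i => S i = ℓ), v i o = ((m:ℝ))⁻¹ := by
        intro i hi
        simp only [Finset.mem_filter] at hi
        simp [hv, hi.2]
      have hmemo : ∀ i ∈ Finset.univ.filter (fun i => ¬ S i = ℓ), v i o = 1/2 := by
        intro i hi
        simp only [Finset.mem_filter, Finset.mem_univ, true_and] at hi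
        have hne1 : ¬ (o = a (S i)) := Ne.symm (hao (S i))
        simp [hv, hi, hne1]
      have hzero : ∀ i ∈ Finset.univ.filter (fun i => ¬ S i = ℓ), v i (a ℓ) = 0 := by
        intro i hi
        simp only [Finset.mem_filter, Finset.mem_univ, true_and] at hi
        have h1 : ¬ (a ℓ = a (S i)) := fun hc => hi (ha hc).symm
        simp [hv, hi, h1, hao ℓ]
      have hcardne : (Finset.univ.filter (fun i => ¬ S i = ℓ)).card = n - n / (m-1) := by
        have htot := Finset.card_filter_add_card_filter_not
          (s := (Finset.univ : Finset (Fin n))) (p := fun i => S i = ℓ)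
        simp only [hS ℓ, Finset.card_univ, Fintype.card_fin] at htot
        omega
      have hSWa : SW v (a ℓ) = ((n / (m-1) : ℕ) : ℝ) * ((m:ℝ))⁻¹ := by
        unfold SW
        rw [← Finset.sum_filter_add_sum_filter_not Finset.univ (fun i => S i = ℓ),
          Finset.sum_congr rfl hmemf, Finset.sum_congr rfl hzero,
          Finset.sum_const, Finset.sum_const, hS ℓ]
        simp
      have hSWo : SW v o = ((n / (m-1) : ℕ) : ℝ) * ((m:ℝ))⁻¹ + ((n - n / (m-1) : ℕ) : ℝ) * (1/2) := by
        unfold SW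
        rw [← Finset.sum_filter_add_sum_filter_not Finset.univ (fun i => S i = ℓ),
          Finset.sum_congr rfl hmemf', Finset.sum_congr rfl hmemo,
          Finset.sum_const, Finset.sum_const, hS ℓ, hcardne]
        simp [nsmul_eq_mul]
      rw [hSWa, hSWo]
      have h1 : n - n / (m-1) = (m - 2) * (n / (m-1)) := by
        have h2 : n - n/(m-1) = (m-1)*(n/(m-1)) - 1*(n/(m-1)) := by rw [hNn, one_mul]
        rw [h2, ← Nat.sub_mul, Nat.sub_sub]
      have hsub : ((n - n / (m-1) : ℕ) : ℝ) = ((m:ℝ) - 2) * ((n / (m-1) : ℕ) : ℝ) := by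
        rw [h1]
        push_cast [Nat.cast_sub (by omega : 2 ≤ m)]
        ring
      rw [hsub]
      set N : ℝ := ((n / (m-1) : ℕ) : ℝ) with hNdef
      have hN0 : 0 ≤ N := by positivity
      have hkey : (m : ℝ) * ((m:ℝ) - 2) / 2 * (N * ((m:ℝ))⁻¹) = ((m:ℝ) - 2) * N / 2 := by
        field_simp
      rw [hkey]
      have : 0 ≤ N * ((m:ℝ))⁻¹ := by positivity
      linarith
end

section
/- Let v be a unit-sum valuation profile on n voters and m candidates, consistent with an ordinal profile σ, and let w be a candidate maximizing SW₁(·|v) over all candidates. Then for every candidate x: SW(x|v) ≤ m · SW(w|v). (Consistency bound of m for the mechanism that outputs a candidate with maximum predicted first-place social welfare, when the predicted profile equals the true one.) -/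
open Finset

/-- `T x`: the set of voters whose top-ranked candidate under `σ` is `x`. -/
def Tset {n m : ℕ} [NeZero m] (σ : Fin n → (Fin m ≃ Fin m)) (x : Fin m) : Finset (Fin n) :=
  Finset.univ.filter (fun i => σ i 0 = x)

/-- The first-place social welfare of `x` under profile `v`. -/
noncomputable def SW1 {n m : ℕ} [NeZero m] (σ : Fin n → (Fin m ≃ Fin m))
    (v : Fin n → Fin m → ℝ) (x : Fin m) : ℝ :=
  ∑ i ∈ Tset σ x, v i x

/-- The plurality score of `x`. -/
def plu {n m : ℕ} [NeZero m] (σ : Fin n → (Fin m ≃ Fin m)) (x : Fin m) : ℕ :=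
  (Tset σ x).card

/-- Consistency bound of `m` for the mechanism outputting a candidate with maximum
first-place social welfare, when the predicted profile equals the true one. -/
theorem stmt4 {n m : ℕ} [NeZero m] (σ : Fin n → (Fin m ≃ Fin m))
    (v : Fin n → Fin m → ℝ) (hv : UnitSum v) (hc : Consistent σ v)
    (w : Fin m) (hw : ∀ y, SW1 σ v y ≤ SW1 σ v w) (x : Fin m) :
    SW v x ≤ (m : ℝ) * SW v w := by
  have h1 : SW v x ≤ ∑ i, v i (σ i 0) := by
    apply Finset.sum_le_sum
    intro i _
    have := hc i 0 ((σ i).symm x) (Fin.zero_le _)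
    simpa using this
  have h2 : ∑ i, v i (σ i 0) = ∑ y, SW1 σ v y := by
    rw [← Finset.sum_fiberwise Finset.univ (fun i => σ i 0) (fun i => v i (σ i 0))]
    apply Finset.sum_congr rfl
    intro y _
    unfold SW1 Tset
    apply Finset.sum_congr rfl
    intro i hi
    simp only [Finset.mem_filter] at hi
    rw [hi.2]
  have h3 : ∑ y, SW1 σ v y ≤ (m : ℝ) * SW1 σ v w := by
    calc ∑ y : Fin m, SW1 σ v y ≤ ∑ _y : Fin m, SW1 σ v w :=
          Finset.sum_le_sum (fun y _ => hw y)
      _ = (m : ℝ) * SW1 σ v w := by simp [mul_comm]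
  have h4 : SW1 σ v w ≤ SW v w := by
    apply Finset.sum_le_sum_of_subset_of_nonneg (Finset.filter_subset _ _)
    intro i _ _; exact hv.1 i w
  have hm : (0:ℝ) ≤ (m:ℝ) := Nat.cast_nonneg m
  calc SW v x ≤ ∑ i, v i (σ i 0) := h1
    _ = ∑ y, SW1 σ v y := h2
    _ ≤ (m : ℝ) * SW1 σ v w := h3
    _ ≤ (m : ℝ) * SW v w := mul_le_mul_of_nonneg_left h4 hm
end

section
/- Let n ≥ 1 and let v and v̂ be two unit-sum valuation profiles on n voters and m candidates, both consistent with the same ordinal profile σ. Let w be a candidate maximizing SW₁(·|v̂) over all candidates. Then for every candidate x: SW(x|v) ≤ min(n·m, m³) · SW(w|v). (Robustness bound of min{nm, m³} for the mechanism that outputs a candidate with maximum predicted first-place social welfare.) -/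
open Finset

/-- Robustness bound of `min{nm, m³}` for the mechanism outputting a candidate with
maximum predicted first-place social welfare. -/
theorem stmt5 {n m : ℕ} [NeZero m] (hn : 1 ≤ n) (σ : Fin n → (Fin m ≃ Fin m))
    (v vhat : Fin n → Fin m → ℝ)
    (hv : UnitSum v) (hc : Consistent σ v)
    (hvhat : UnitSum vhat) (hchat : Consistent σ vhat)
    (w : Fin m) (hw : ∀ y, SW1 σ vhat y ≤ SW1 σ vhat w) (x : Fin m) :
    SW v x ≤ min ((n : ℝ) * m) ((m : ℝ) ^ 3) * SW v w := by
  have hm : 0 < m := Nat.pos_of_ne_zero (NeZero.ne m)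
  have hmR : (0:ℝ) < m := by exact_mod_cast hm
  have hnR : (1:ℝ) ≤ n := by exact_mod_cast hn
  -- each valuation ≤ 1
  have hle1 : ∀ (u : Fin n → Fin m → ℝ), UnitSum u → ∀ i y, u i y ≤ 1 := by
    intro u hu i y
    rw [← hu.2 i]
    exact Finset.single_le_sum (fun z _ => hu.1 i z) (mem_univ y)
  -- top value ≥ 1/m
  have htop : ∀ (u : Fin n → Fin m → ℝ), UnitSum u → Consistent σ u →
      ∀ i, 1/(m:ℝ) ≤ u i (σ i 0) := by
    intro u hu hcu i
    have h1 : (1:ℝ) = ∑ p : Fin m, u i (σ i p) := by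
      rw [Equiv.sum_comp (σ i) (u i), hu.2 i]
    have h2 : ∑ p : Fin m, u i (σ i p) ≤ (m:ℝ) * u i (σ i 0) := by
      calc ∑ p : Fin m, u i (σ i p) ≤ ∑ _p : Fin m, u i (σ i 0) :=
            Finset.sum_le_sum (fun p _ => hcu i 0 p (Fin.zero_le p))
        _ = (m:ℝ) * u i (σ i 0) := by simp [mul_comm]
    rw [div_le_iff₀ hmR]
    nlinarith
  -- partition sum
  have hpart : ∑ y, SW1 σ vhat y = ∑ i, vhat i (σ i 0) := by
    unfold SW1 Tset
    rw [← Finset.sum_fiberwise univ (fun i => σ i 0) (fun i => vhat i (σ i 0))]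
    refine Finset.sum_congr rfl (fun y _ => Finset.sum_congr rfl (fun i hi => ?_))
    simp only [mem_filter] at hi
    rw [hi.2]
  have hsum_lb : (n:ℝ)/m ≤ ∑ y, SW1 σ vhat y := by
    rw [hpart]
    calc (n:ℝ)/m = ∑ _i : Fin n, 1/(m:ℝ) := by simp [div_eq_mul_inv]
      _ ≤ ∑ i, vhat i (σ i 0) := Finset.sum_le_sum (fun i _ => htop vhat hvhat hchat i)
  have hmax : ∑ y, SW1 σ vhat y ≤ (m:ℝ) * SW1 σ vhat w := by
    calc ∑ y, SW1 σ vhat y ≤ ∑ _y : Fin m, SW1 σ vhat w :=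
          Finset.sum_le_sum (fun y _ => hw y)
      _ = (m:ℝ) * SW1 σ vhat w := by simp [mul_comm]
  have hplu_ub : SW1 σ vhat w ≤ (plu σ w : ℝ) := by
    unfold SW1 plu
    calc ∑ i ∈ Tset σ w, vhat i w ≤ ∑ _i ∈ Tset σ w, (1:ℝ) :=
          Finset.sum_le_sum (fun i _ => hle1 vhat hvhat i w)
      _ = ((Tset σ w).card : ℝ) := by simp
  have hplu_lb : (plu σ w : ℝ) * (1/m) ≤ SW1 σ v w := by
    unfold SW1 plu
    calc ((Tset σ w).card : ℝ) * (1/m) = ∑ _i ∈ Tset σ w, 1/(m:ℝ) := by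
          simp [mul_comm]
      _ ≤ ∑ i ∈ Tset σ w, v i w := by
          refine Finset.sum_le_sum (fun i hi => ?_)
          have : σ i 0 = w := by simpa [Tset] using hi
          rw [← this]; exact htop v hv hc i
  have hSWw : SW1 σ v w ≤ SW v w := by
    unfold SW1 SW
    exact Finset.sum_le_sum_of_subset_of_nonneg (Finset.subset_univ _)
      (fun i _ _ => hv.1 i w)
  have hSWx : SW v x ≤ (n:ℝ) := by
    unfold SW
    calc ∑ i, v i x ≤ ∑ _i : Fin n, (1:ℝ) := Finset.sum_le_sum (fun i _ => hle1 v hv i x)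
      _ = (n:ℝ) := by simp
  -- division-free versions
  have hsum_lb' : (n:ℝ) ≤ (∑ y, SW1 σ vhat y) * m := (div_le_iff₀ hmR).mp hsum_lb
  have h1 : (plu σ w : ℝ) ≤ SW v w * m := by
    have h := mul_le_mul_of_nonneg_right (le_trans hplu_lb hSWw) hmR.le
    have e : (plu σ w : ℝ) * (1/m) * m = (plu σ w : ℝ) := by field_simp
    rwa [e] at h
  have hP : (n:ℝ) ≤ (plu σ w : ℝ) * m * m := by
    calc (n:ℝ) ≤ (∑ y, SW1 σ vhat y) * m := hsum_lb'
      _ ≤ ((m:ℝ) * SW1 σ vhat w) * m := mul_le_mul_of_nonneg_right hmax hmR.le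
      _ ≤ ((m:ℝ) * (plu σ w : ℝ)) * m := by
          have := mul_le_mul_of_nonneg_left hplu_ub hmR.le
          nlinarith
      _ = (plu σ w : ℝ) * m * m := by ring
  have hplu_pos : (1:ℝ) ≤ (plu σ w : ℝ) := by
    have h0 : (0:ℝ) < (plu σ w : ℝ) := by nlinarith [mul_pos hmR hmR]
    have : 0 < plu σ w := by exact_mod_cast h0
    exact_mod_cast this
  rcases le_total ((n:ℝ) * m) ((m:ℝ)^3) with h | h
  · rw [min_eq_left h]
    have h2 : (1:ℝ) ≤ SW v w * m := le_trans hplu_pos h1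
    have h3 : (n:ℝ) * 1 ≤ (n:ℝ) * (SW v w * m) :=
      mul_le_mul_of_nonneg_left h2 (by linarith)
    calc SW v x ≤ (n:ℝ) := hSWx
      _ ≤ (n:ℝ) * (SW v w * m) := by linarith
      _ = (n:ℝ) * m * SW v w := by ring
  · rw [min_eq_right h]
    have h4 : (plu σ w : ℝ) * (m*m) ≤ (SW v w * m) * (m*m) :=
      mul_le_mul_of_nonneg_right h1 (mul_nonneg hmR.le hmR.le)
    calc SW v x ≤ (n:ℝ) := hSWx
      _ ≤ (plu σ w : ℝ) * m * m := hP
      _ ≤ SW v w * m * m * m := by nlinarith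
      _ = (m:ℝ)^3 * SW v w := by ring
end

section
/- Let λ be a real number with 1 ≤ λ ≤ m, and let v be a unit-sum valuation profile on n voters and m candidates, consistent with an ordinal profile σ. Let a* be a candidate maximizing SW₁(·|v), let S_λ = {x : λ·SW₁(x|v) ≥ SW₁(a*|v)}, and let w ∈ S_λ be a candidate maximizing plu(·) over S_λ. Then for every candidate x: SW(x|v) ≤ λ·m · SW(w|v). (Consistency bound of λm for the parameterized mechanism, when the predicted profile equals the true one.) -/
open Finset

/-- Consistency bound of `λm` for the parameterized mechanism (Mechanism 2), when the
predicted valuation profile equals the true one. Here `w` is a candidate with maximum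
plurality score among `S_λ = {x : λ·SW₁(x|v) ≥ SW₁(a*|v)}`. -/
theorem stmt6 {n m : ℕ} [NeZero m] (σ : Fin n → (Fin m ≃ Fin m))
    (v : Fin n → Fin m → ℝ) (hv : UnitSum v) (hc : Consistent σ v)
    (lam : ℝ) (hlam1 : 1 ≤ lam) (hlam2 : lam ≤ m)
    (astar : Fin m) (hastar : ∀ y, SW1 σ v y ≤ SW1 σ v astar)
    (w : Fin m) (hwS : SW1 σ v astar ≤ lam * SW1 σ v w)
    (hwmax : ∀ x : Fin m, SW1 σ v astar ≤ lam * SW1 σ v x → plu σ x ≤ plu σ w)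
    (x : Fin m) :
    SW v x ≤ lam * m * SW v w := by
  have hnn := hv.1
  have h1 : ∀ i, v i x ≤ v i (σ i 0) := by
    intro i
    have := hc i 0 ((σ i).symm x) (Fin.zero_le _)
    simpa using this
  have h2 : SW v x ≤ ∑ i, v i (σ i 0) := Finset.sum_le_sum fun i _ => h1 i
  have h3 : ∑ y, SW1 σ v y = ∑ i, v i (σ i 0) := by
    rw [← Finset.sum_fiberwise Finset.univ (fun i => σ i 0) (fun i => v i (σ i 0))]
    refine Finset.sum_congr rfl fun y _ => Finset.sum_congr rfl fun i hi => ?_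
    simp only [SW1, Tset, Finset.mem_filter] at hi ⊢
    rw [hi.2]
  have h4 : ∀ y, SW1 σ v y ≤ lam * SW1 σ v w := fun y => (hastar y).trans hwS
  have h5 : ∑ y, SW1 σ v y ≤ (m : ℝ) * (lam * SW1 σ v w) := by
    calc ∑ y, SW1 σ v y ≤ ∑ _y : Fin m, lam * SW1 σ v w :=
          Finset.sum_le_sum fun y _ => h4 y
      _ = (m : ℝ) * (lam * SW1 σ v w) := by simp [mul_comm]
  have h6 : SW1 σ v w ≤ SW v w := by
    apply Finset.sum_le_sum_of_subset_of_nonneg (Finset.subset_univ _)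
    intro i _ _; exact hnn i w
  have hlam0 : (0:ℝ) ≤ lam := le_trans zero_le_one hlam1
  have hm0 : (0:ℝ) ≤ (m:ℝ) := Nat.cast_nonneg m
  calc SW v x ≤ ∑ i, v i (σ i 0) := h2
    _ = ∑ y, SW1 σ v y := h3.symm
    _ ≤ (m : ℝ) * (lam * SW1 σ v w) := h5
    _ ≤ lam * m * SW v w := by nlinarith [mul_le_mul_of_nonneg_left h6 hlam0]
end

section
/- Let λ be a real number with 1 ≤ λ ≤ m, and let v and v̂ be two unit-sum valuation profiles on n voters and m candidates, both consistent with the same ordinal profile σ. Let a* be a candidate maximizing SW₁(·|v̂), let S_λ = {x : λ·SW₁(x|v̂) ≥ SW₁(a*|v̂)}, and let w ∈ S_λ be a candidate maximizing plu(·) over S_λ. Then for every candidate x: λ · SW(x|v) ≤ m³ · SW(w|v). (Robustness bound of m³/λ for the parameterized mechanism.) -/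
open Finset

lemma val_le_one {n m : ℕ} {v : Fin n → Fin m → ℝ} (hv : UnitSum v) (i : Fin n) (x : Fin m) :
    v i x ≤ 1 := by
  rw [← hv.2 i]
  exact Finset.single_le_sum (fun y _ => hv.1 i y) (mem_univ x)

lemma top_ge {n m : ℕ} [NeZero m] {σ : Fin n → (Fin m ≃ Fin m)} {v : Fin n → Fin m → ℝ}
    (hv : UnitSum v) (hc : Consistent σ v) (i : Fin n) :
    1 ≤ (m : ℝ) * v i (σ i 0) := by
  have h2 : ∑ x, v i x = ∑ p, v i (σ i p) := (Equiv.sum_comp (σ i) (v i)).symm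
  calc (1:ℝ) = ∑ p, v i (σ i p) := by rw [← h2, hv.2 i]
    _ ≤ ∑ _p : Fin m, v i (σ i 0) :=
        Finset.sum_le_sum fun p _ => hc i 0 p (Fin.zero_le p)
    _ = (m : ℝ) * v i (σ i 0) := by
        rw [Finset.sum_const, card_univ, Fintype.card_fin, nsmul_eq_mul]

lemma SW1_nonneg {n m : ℕ} [NeZero m] {σ : Fin n → (Fin m ≃ Fin m)} {v : Fin n → Fin m → ℝ}
    (hv : UnitSum v) (y : Fin m) : 0 ≤ SW1 σ v y :=
  Finset.sum_nonneg fun i _ => hv.1 i y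

lemma plu_le_mSW1 {n m : ℕ} [NeZero m] {σ : Fin n → (Fin m ≃ Fin m)} {v : Fin n → Fin m → ℝ}
    (hv : UnitSum v) (hc : Consistent σ v) (y : Fin m) :
    (plu σ y : ℝ) ≤ (m : ℝ) * SW1 σ v y := by
  have : ∀ i ∈ Tset σ y, (1:ℝ) ≤ (m : ℝ) * v i y := by
    intro i hi
    have hiy : σ i 0 = y := by simpa [Tset] using hi
    simpa [hiy] using top_ge hv hc i
  calc (plu σ y : ℝ) = ∑ i ∈ Tset σ y, (1:ℝ) := by simp [plu]
    _ ≤ ∑ i ∈ Tset σ y, (m : ℝ) * v i y := Finset.sum_le_sum this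
    _ = (m : ℝ) * SW1 σ v y := by rw [SW1, Finset.mul_sum]

lemma SW1_le_plu {n m : ℕ} [NeZero m] {σ : Fin n → (Fin m ≃ Fin m)} {v : Fin n → Fin m → ℝ}
    (hv : UnitSum v) (y : Fin m) : SW1 σ v y ≤ (plu σ y : ℝ) := by
  calc SW1 σ v y ≤ ∑ i ∈ Tset σ y, (1:ℝ) :=
        Finset.sum_le_sum fun i _ => val_le_one hv i y
    _ = (plu σ y : ℝ) := by simp [plu]

lemma SW1_le_SW {n m : ℕ} [NeZero m] {σ : Fin n → (Fin m ≃ Fin m)} {v : Fin n → Fin m → ℝ}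
    (hv : UnitSum v) (y : Fin m) : SW1 σ v y ≤ SW v y :=
  Finset.sum_le_sum_of_subset_of_nonneg (Finset.subset_univ _) fun i _ _ => hv.1 i y

lemma sum_plu {n m : ℕ} [NeZero m] (σ : Fin n → (Fin m ≃ Fin m)) :
    ∑ y : Fin m, plu σ y = n := by
  have := Finset.card_eq_sum_card_fiberwise
    (f := fun i : Fin n => σ i 0) (s := Finset.univ) (t := Finset.univ)
    (fun i _ => mem_univ _)
  simpa [plu, Tset, card_univ] using this.symm

/-- Robustness bound of `m³/λ` for the parameterized mechanism (Mechanism 2). Here `w` is a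
candidate with maximum plurality score among `S_λ = {x : λ·SW₁(x|v̂) ≥ SW₁(a*|v̂)}`. -/
theorem stmt7 {n m : ℕ} [NeZero m] (σ : Fin n → (Fin m ≃ Fin m))
    (v vhat : Fin n → Fin m → ℝ)
    (hv : UnitSum v) (hc : Consistent σ v)
    (hvhat : UnitSum vhat) (hchat : Consistent σ vhat)
    (lam : ℝ) (hlam1 : 1 ≤ lam) (hlam2 : lam ≤ m)
    (astar : Fin m) (hastar : ∀ y, SW1 σ vhat y ≤ SW1 σ vhat astar)
    (w : Fin m) (hwS : SW1 σ vhat astar ≤ lam * SW1 σ vhat w)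
    (hwmax : ∀ x : Fin m, SW1 σ vhat astar ≤ lam * SW1 σ vhat x → plu σ x ≤ plu σ w)
    (x : Fin m) :
    lam * SW v x ≤ (m : ℝ) ^ 3 * SW v w := by
  have hlam0 : 0 ≤ lam := le_trans zero_le_one hlam1
  have hm0 : (0:ℝ) ≤ m := Nat.cast_nonneg m
  -- a* is in S_λ, hence plu a* ≤ plu w
  have hastarS : SW1 σ vhat astar ≤ lam * SW1 σ vhat astar :=
    le_mul_of_one_le_left (SW1_nonneg hvhat astar) hlam1
  have hpluastar : plu σ astar ≤ plu σ w := hwmax astar hastarS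
  -- key: for every y, λ * plu y ≤ m * plu w
  have key : ∀ y : Fin m, lam * (plu σ y : ℝ) ≤ (m : ℝ) * (plu σ w : ℝ) := by
    intro y
    by_cases hy : SW1 σ vhat astar ≤ lam * SW1 σ vhat y
    · have h1 : (plu σ y : ℝ) ≤ (plu σ w : ℝ) := Nat.cast_le.mpr (hwmax y hy)
      calc lam * (plu σ y : ℝ) ≤ (m : ℝ) * (plu σ y : ℝ) :=
            mul_le_mul_of_nonneg_right hlam2 (Nat.cast_nonneg _)
        _ ≤ (m : ℝ) * (plu σ w : ℝ) := mul_le_mul_of_nonneg_left h1 hm0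
    · push_neg at hy
      calc lam * (plu σ y : ℝ) ≤ lam * ((m:ℝ) * SW1 σ vhat y) :=
            mul_le_mul_of_nonneg_left (plu_le_mSW1 hvhat hchat y) hlam0
        _ = (m:ℝ) * (lam * SW1 σ vhat y) := by ring
        _ ≤ (m:ℝ) * SW1 σ vhat astar := mul_le_mul_of_nonneg_left hy.le hm0
        _ ≤ (m:ℝ) * (plu σ astar : ℝ) :=
            mul_le_mul_of_nonneg_left (SW1_le_plu hvhat astar) hm0
        _ ≤ (m:ℝ) * (plu σ w : ℝ) :=
            mul_le_mul_of_nonneg_left (Nat.cast_le.mpr hpluastar) hm0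
  -- λ * SW v x ≤ λ * n
  have hSWx : SW v x ≤ (n : ℝ) := by
    calc SW v x ≤ ∑ _i : Fin n, (1:ℝ) := Finset.sum_le_sum fun i _ => val_le_one hv i x
      _ = (n : ℝ) := by simp
  have hn : (n : ℝ) = ∑ y : Fin m, (plu σ y : ℝ) := by
    rw [← Nat.cast_sum, sum_plu]
  have step1 : lam * SW v x ≤ (m:ℝ)^2 * (plu σ w : ℝ) := by
    calc lam * SW v x ≤ lam * (n : ℝ) := mul_le_mul_of_nonneg_left hSWx hlam0
      _ = ∑ y : Fin m, lam * (plu σ y : ℝ) := by rw [hn, Finset.mul_sum]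
      _ ≤ ∑ _y : Fin m, (m : ℝ) * (plu σ w : ℝ) := Finset.sum_le_sum fun y _ => key y
      _ = (m:ℝ)^2 * (plu σ w : ℝ) := by
          rw [Finset.sum_const, card_univ, Fintype.card_fin, nsmul_eq_mul]; ring
  have step2 : (m:ℝ)^2 * (plu σ w : ℝ) ≤ (m:ℝ)^3 * SW v w := by
    calc (m:ℝ)^2 * (plu σ w : ℝ) ≤ (m:ℝ)^2 * ((m:ℝ) * SW1 σ v w) :=
          mul_le_mul_of_nonneg_left (plu_le_mSW1 hv hc w) (by positivity)
      _ = (m:ℝ)^3 * SW1 σ v w := by ring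
      _ ≤ (m:ℝ)^3 * SW v w :=
          mul_le_mul_of_nonneg_left (SW1_le_SW hv w) (by positivity)
  exact le_trans step1 step2
end

section
/- Let λ be a real number with 1 ≤ λ ≤ m, and let v and v̂ be two unit-sum valuation profiles on n voters and m candidates, both consistent with the same ordinal profile σ. Let a* be a candidate maximizing SW₁(·|v̂), let S_λ = {x : λ·SW₁(x|v̂) ≥ SW₁(a*|v̂)}, and let w ∈ S_λ be a candidate maximizing plu(·) over S_λ. Assume SW₁(w|v) > 0 and SW₁(w|v̂) > 0, and define ρ(w|u) = (max_y SW₁(y|u)) / SW₁(w|u) for a profile u, and the prediction error η(w) = max{ ρ(w|v)/ρ(w|v̂), 1 }. Then for every candidate x: SW(x|v) ≤ m · η(w) · ρ(w|v̂) · SW(w|v). -/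
open Finset

/-- The maximum first-place social welfare over all candidates. -/
noncomputable def maxSW1 {n m : ℕ} [NeZero m] (σ : Fin n → (Fin m ≃ Fin m))
    (v : Fin n → Fin m → ℝ) : ℝ :=
  Finset.univ.sup' ⟨(0 : Fin m), Finset.mem_univ _⟩ (SW1 σ v)

/-- `ρ(w|u)`: the approximation of the maximum first-place social welfare achieved by `w`
with respect to the profile `u`. -/
noncomputable def rho {n m : ℕ} [NeZero m] (σ : Fin n → (Fin m ≃ Fin m))
    (u : Fin n → Fin m → ℝ) (w : Fin m) : ℝ :=
  maxSW1 σ u / SW1 σ u w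

/-- The prediction error `η(w) = max{ρ(w|v)/ρ(w|v̂), 1}`. -/
noncomputable def eta {n m : ℕ} [NeZero m] (σ : Fin n → (Fin m ≃ Fin m))
    (v vhat : Fin n → Fin m → ℝ) (w : Fin m) : ℝ :=
  max (rho σ v w / rho σ vhat w) 1

/-- Error-dependent distortion bound `m · η(w) · ρ(w|v̂)` for the parameterized mechanism. -/
theorem stmt9 {n m : ℕ} [NeZero m] (σ : Fin n → (Fin m ≃ Fin m))
    (v vhat : Fin n → Fin m → ℝ)
    (hv : UnitSum v) (hc : Consistent σ v)
    (hvhat : UnitSum vhat) (hchat : Consistent σ vhat)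
    (lam : ℝ) (hlam1 : 1 ≤ lam) (hlam2 : lam ≤ m)
    (astar : Fin m) (hastar : ∀ y, SW1 σ vhat y ≤ SW1 σ vhat astar)
    (w : Fin m) (hwS : SW1 σ vhat astar ≤ lam * SW1 σ vhat w)
    (hwmax : ∀ x : Fin m, SW1 σ vhat astar ≤ lam * SW1 σ vhat x → plu σ x ≤ plu σ w)
    (hpos : 0 < SW1 σ v w) (hposhat : 0 < SW1 σ vhat w)
    (x : Fin m) :
    SW v x ≤ (m : ℝ) * eta σ v vhat w * rho σ vhat w * SW v w := by
  have hMge : SW1 σ v w ≤ maxSW1 σ v := Finset.le_sup' _ (Finset.mem_univ w)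
  have hMhge : SW1 σ vhat w ≤ maxSW1 σ vhat := Finset.le_sup' _ (Finset.mem_univ w)
  have hMpos : 0 < maxSW1 σ v := lt_of_lt_of_le hpos hMge
  have hMhpos : 0 < maxSW1 σ vhat := lt_of_lt_of_le hposhat hMhge
  have hrhohat_pos : 0 < rho σ vhat w := div_pos hMhpos hposhat
  have h1 : ∀ i, v i x ≤ v i (σ i 0) := fun i => by
    have := hc i 0 ((σ i).symm x) (Fin.zero_le _)
    simpa using this
  have h2 : SW v x ≤ ∑ i, v i (σ i 0) := Finset.sum_le_sum (fun i _ => h1 i)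
  have h3 : ∑ i, v i (σ i 0) = ∑ y : Fin m, SW1 σ v y := by
    rw [← Finset.sum_fiberwise Finset.univ (fun i => σ i 0) (fun i => v i (σ i 0))]
    refine Finset.sum_congr rfl (fun y _ => ?_)
    unfold SW1 Tset
    refine Finset.sum_congr rfl (fun i hi => ?_)
    rw [(Finset.mem_filter.mp hi).2]
  have h4 : ∑ y : Fin m, SW1 σ v y ≤ (m : ℝ) * maxSW1 σ v := by
    calc ∑ y : Fin m, SW1 σ v y ≤ ∑ _y : Fin m, maxSW1 σ v :=
          Finset.sum_le_sum (fun y _ => Finset.le_sup' _ (Finset.mem_univ y))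
      _ = (m : ℝ) * maxSW1 σ v := by
          simp [Finset.sum_const, nsmul_eq_mul]
  have hSW1le : SW1 σ v w ≤ SW v w := by
    unfold SW1 SW
    exact Finset.sum_le_sum_of_subset_of_nonneg (Finset.subset_univ _)
      (fun i _ _ => hv.1 i w)
  have heta : rho σ v w ≤ eta σ v vhat w * rho σ vhat w := by
    have hle : rho σ v w / rho σ vhat w ≤ eta σ v vhat w := le_max_left _ _
    calc rho σ v w = (rho σ v w / rho σ vhat w) * rho σ vhat w := by
          field_simp
      _ ≤ eta σ v vhat w * rho σ vhat w :=
          mul_le_mul_of_nonneg_right hle hrhohat_pos.le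
  have hrv_nonneg : 0 ≤ rho σ v w := div_nonneg hMpos.le hpos.le
  have hfinal : maxSW1 σ v ≤ eta σ v vhat w * rho σ vhat w * SW v w := by
    have hMe : maxSW1 σ v = rho σ v w * SW1 σ v w := by
      unfold rho; field_simp
    rw [hMe]
    calc rho σ v w * SW1 σ v w ≤ rho σ v w * SW v w :=
          mul_le_mul_of_nonneg_left hSW1le hrv_nonneg
      _ ≤ eta σ v vhat w * rho σ vhat w * SW v w :=
          mul_le_mul_of_nonneg_right heta (le_trans hpos.le hSW1le)
  calc SW v x ≤ (m : ℝ) * maxSW1 σ v := le_trans h2 (h3 ▸ h4)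
    _ ≤ (m : ℝ) * (eta σ v vhat w * rho σ vhat w * SW v w) :=
        mul_le_mul_of_nonneg_left hfinal (Nat.cast_nonneg m)
    _ = _ := by ring
end

section
/- Let m ≥ 4, let k ≥ 1 with k + 2 ≤ m, and let n be a positive multiple of m−1. Label the candidates a_1, …, a_{m−1}, o and partition the voters into m−1 sets S_1, …, S_{m−1} of size n/(m−1). Let σ be an ordinal profile in which, for every j ∈ {1,…,m−1} and every ℓ ∈ {1,…,k+1}, candidate a_j is ranked at position ℓ by all voters in the set S_{(j+ℓ−1) mod (m−1)}, every voter ranks o at position k+2, and the remaining positions are arbitrary. Let v̂ be the unit-sum valuation profile consistent with σ in which every voter has value 2^{−ℓ} for the candidate she ranks at position ℓ for each ℓ ∈ {1,…,k}, value 2^{−(k+1)} for each of the candidates at positions k+1 and k+2, and value 0 for all other candidates. Then for every candidate w: (a) if w = o, there exists a unit-sum valuation profile v consistent with σ that agrees with v̂ on every voter's top k positions (i.e., on the answers to the k accurate queries) such that SW(o|v) = 0 and SW(a_1|v) > 0; and (b) if w = a_j for some j, then under the true profile v = v̂, SW(o|v̂) = ((m−1)/(2^{k+1}−1)) · SW(a_j|v̂).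 (This shows that a mechanism with access to the true top-k values and a prediction of the remaining values cannot simultaneously achieve consistency o(m/2^k) and bounded robustness.) -/
open Finset

noncomputable def fval (k p : ℕ) : ℝ :=
  if p < k then (1/2)^(p+1) else if p = k then (1/2)^k else 0

noncomputable def gval (k p : ℕ) : ℝ :=
  if p < k then (1/2)^(p+1) else if p = k then (1/2)^(k+1) else 0

lemma geomsum (k : ℕ) : ∑ p ∈ Finset.range k, (1/2:ℝ)^(p+1) = 1 - (1/2)^k := by
  induction k with
  | zero => simp
  | succ n ih => rw [Finset.sum_range_succ, ih]; ring

lemma fval_nonneg (k p : ℕ) : 0 ≤ fval k p := by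
  unfold fval; split_ifs <;> positivity

lemma fval_anti (k : ℕ) {p q : ℕ} (h : p ≤ q) : fval k q ≤ fval k p := by
  have h2 : (0:ℝ) ≤ (1/2:ℝ) := by norm_num
  have hle : (1/2:ℝ) ≤ 1 := by norm_num
  unfold fval
  by_cases hq : q < k
  · have hp : p < k := lt_of_le_of_lt h hq
    rw [if_pos hp, if_pos hq]
    exact pow_le_pow_of_le_one h2 hle (by omega)
  · by_cases hqk : q = k
    · rw [if_neg hq, if_pos hqk]
      by_cases hpk : p < k
      · rw [if_pos hpk]
        exact pow_le_pow_of_le_one h2 hle (by omega)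
      · rw [if_neg hpk, if_pos (by omega)]
    · rw [if_neg hq, if_neg hqk]
      split_ifs <;> positivity

lemma fval_sum (k m : ℕ) (hkm : k < m) : ∑ p ∈ Finset.range m, fval k p = 1 := by
  rw [← Finset.sum_subset (Finset.range_subset_range.2 hkm)]
  · rw [Finset.sum_range_succ]
    have h1 : ∀ p ∈ Finset.range k, fval k p = (1/2:ℝ)^(p+1) := by
      intro p hp
      rw [fval, if_pos (Finset.mem_range.mp hp)]
    rw [Finset.sum_congr rfl h1, geomsum]
    rw [fval, if_neg (by omega), if_pos rfl]
    ring
  · intro p hp hpn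
    rw [Finset.mem_range] at hp
    rw [Finset.mem_range, not_lt] at hpn
    rw [fval, if_neg (by omega), if_neg (by omega)]

lemma gval_sum (k m : ℕ) (hkm : k < m) :
    ∑ p ∈ Finset.range m, gval k p = 1 - (1/2:ℝ)^(k+1) := by
  rw [← Finset.sum_subset (Finset.range_subset_range.2 hkm)]
  · rw [Finset.sum_range_succ]
    have h1 : ∀ p ∈ Finset.range k, gval k p = (1/2:ℝ)^(p+1) := by
      intro p hp
      rw [gval, if_pos (Finset.mem_range.mp hp)]
    rw [Finset.sum_congr rfl h1, geomsum]
    rw [gval, if_neg (by omega), if_pos rfl]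
    ring
  · intro p hp hpn
    rw [Finset.mem_range] at hp
    rw [Finset.mem_range, not_lt] at hpn
    rw [gval, if_neg (by omega), if_neg (by omega)]


/-- A mechanism with access to the true top-`k` values and a prediction of the remaining
values cannot simultaneously achieve consistency `o(m/2^k)` and bounded robustness:
the underlying instance. Positions are zero-indexed: for `ℓ ∈ {0, …, k}` (one-indexed
positions `1, …, k+1`), candidate `a_j` is ranked at position `ℓ` by all voters in
`S_{(j+ℓ) mod (m-1)}`, and every voter ranks `o` at position `k+1` (one-indexed `k+2`). -/
theorem stmt17 (m n k : ℕ) (hm : 4 ≤ m) (hk : 1 ≤ k) (hkm : k + 2 ≤ m)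
    (hn : 0 < n) (hdvd : (m - 1) ∣ n)
    (o : Fin m) (a : Fin (m - 1) → Fin m) (ha : Function.Injective a)
    (hao : ∀ j, a j ≠ o)
    (S : Fin n → Fin (m - 1))
    (hS : ∀ s, (Finset.univ.filter (fun i => S i = s)).card = n / (m - 1))
    (σ : Fin n → (Fin m ≃ Fin m))
    (hσa : ∀ (j : Fin (m - 1)) (ℓ : Fin m), (ℓ : ℕ) ≤ k → ∀ i : Fin n,
      (S i : ℕ) = ((j : ℕ) + (ℓ : ℕ)) % (m - 1) → σ i ℓ = a j)
    (hσo : ∀ i, σ i ⟨k + 1, by omega⟩ = o)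
    (vhat : Fin n → Fin m → ℝ) (hvhatU : UnitSum vhat) (hvhatC : Consistent σ vhat)
    (hvtop : ∀ (i : Fin n) (p : Fin m), (p : ℕ) < k →
      vhat i (σ i p) = (1 / 2 : ℝ) ^ ((p : ℕ) + 1))
    (hvmid : ∀ (i : Fin n) (p : Fin m), ((p : ℕ) = k ∨ (p : ℕ) = k + 1) →
      vhat i (σ i p) = (1 / 2 : ℝ) ^ (k + 1))
    (hvrest : ∀ (i : Fin n) (p : Fin m), k + 2 ≤ (p : ℕ) → vhat i (σ i p) = 0) :
    ∀ w : Fin m,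
      (w = o → ∃ v : Fin n → Fin m → ℝ, UnitSum v ∧ Consistent σ v ∧
        (∀ (i : Fin n) (p : Fin m), (p : ℕ) < k → v i (σ i p) = vhat i (σ i p)) ∧
        SW v o = 0 ∧ 0 < SW v (a ⟨0, by omega⟩)) ∧
      (∀ j : Fin (m - 1), w = a j →
        SW vhat o = (((m : ℝ) - 1) / ((2 : ℝ) ^ (k + 1) - 1)) * SW vhat (a j)) := by
  have hM : 0 < m - 1 := by omega
  intro w
  constructor
  · -- Part (a)
    intro _
    refine ⟨fun i x => fval k ((σ i).symm x : ℕ), ?_, ?_, ?_, ?_, ?_⟩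
    · constructor
      · intro i x; exact fval_nonneg _ _
      · intro i
        have := Equiv.sum_comp (σ i).symm (fun p : Fin m => fval k (p : ℕ))
        rw [this, Fin.sum_univ_eq_sum_range, fval_sum k m (by omega)]
    · intro i p q hpq
      simp only [Equiv.symm_apply_apply]
      exact fval_anti k hpq
    · intro i p hp
      simp only [Equiv.symm_apply_apply]
      rw [hvtop i p hp, fval, if_pos hp]
    · -- SW v o = 0
      show ∑ i : Fin n, fval k ((σ i).symm o : ℕ) = 0
      apply Finset.sum_eq_zero
      intro i _
      have h1 : (σ i).symm o = ⟨k + 1, by omega⟩ := by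
        rw [← hσo i, Equiv.symm_apply_apply]
      rw [h1]
      show fval k (k+1) = 0
      rw [fval, if_neg (by omega), if_neg (by omega)]
    · -- 0 < SW v (a 0)
      have hcardpos : 0 < n / (m - 1) := Nat.div_pos (Nat.le_of_dvd hn hdvd) hM
      have hc := hS ⟨0, hM⟩
      have : 0 < (Finset.univ.filter (fun i => S i = ⟨0, hM⟩)).card := by omega
      obtain ⟨i0, hi0⟩ := Finset.card_pos.mp this
      have hSi0 : S i0 = ⟨0, hM⟩ := (Finset.mem_filter.mp hi0).2
      have hs0 : σ i0 ⟨0, by omega⟩ = a ⟨0, hM⟩ := by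
        apply hσa ⟨0, hM⟩ ⟨0, by omega⟩ (by simp) i0
        simp [hSi0]
      show (0:ℝ) < ∑ i : Fin n, fval k ((σ i).symm (a ⟨0, by omega⟩) : ℕ)
      apply Finset.sum_pos' (fun i _ => fval_nonneg _ _)
      refine ⟨i0, Finset.mem_univ _, ?_⟩
      have h1 : (σ i0).symm (a ⟨0, by omega⟩) = ⟨0, by omega⟩ := by
        rw [show (a ⟨0, by omega⟩ : Fin m) = σ i0 ⟨0, by omega⟩ from hs0.symm,
          Equiv.symm_apply_apply]
      rw [h1]
      show (0:ℝ) < fval k 0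
      rw [fval, if_pos (by omega)]
      norm_num
  · -- Part (b)
    intro j _
    have L1 : ∀ (i : Fin n) (ℓ : Fin m), (ℓ : ℕ) ≤ k →
        σ i ℓ = a ⟨((S i : ℕ) + (m-1) - ℓ) % (m-1), Nat.mod_lt _ hM⟩ := by
      intro i ℓ hℓ
      apply hσa _ _ hℓ
      show (S i : ℕ) = (((S i : ℕ) + (m-1) - ℓ) % (m-1) + ℓ) % (m-1)
      rw [Nat.mod_add_mod,
        (by omega : (S i : ℕ) + (m-1) - ℓ + ℓ = (S i : ℕ) + (m-1)),
        Nat.add_mod_right, Nat.mod_eq_of_lt (S i).isLt]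
    have L2 : ∀ (i : Fin n) (ℓ : Fin m), (ℓ : ℕ) ≤ k →
        (σ i ℓ = a j ↔ (S i : ℕ) = ((j : ℕ) + (ℓ : ℕ)) % (m-1)) := by
      intro i ℓ hℓ
      constructor
      · intro h
        have hj : j = ⟨((S i : ℕ) + (m-1) - ℓ) % (m-1), Nat.mod_lt _ hM⟩ :=
          ha (h.symm.trans (L1 i ℓ hℓ))
        have hjv : (j : ℕ) = ((S i : ℕ) + (m-1) - ℓ) % (m-1) := congrArg Fin.val hj
        rw [hjv, Nat.mod_add_mod,
          (by omega : (S i : ℕ) + (m-1) - ℓ + ℓ = (S i : ℕ) + (m-1)),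
          Nat.add_mod_right, Nat.mod_eq_of_lt (S i).isLt]
      · exact fun h => hσa j ℓ hℓ i h
    -- rewrite SW vhat (a j) as a double sum
    have key : SW vhat (a j) =
        ∑ ℓ : Fin m, ∑ i : Fin n, (if σ i ℓ = a j then vhat i (σ i ℓ) else 0) := by
      rw [SW, Finset.sum_comm]
      apply Finset.sum_congr rfl
      intro i _
      rw [Finset.sum_eq_single ((σ i).symm (a j))]
      · rw [if_pos (by simp), Equiv.apply_symm_apply]
      · intro ℓ _ hℓ
        rw [if_neg]
        intro h
        exact hℓ (by rw [← h, Equiv.symm_apply_apply])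
      · intro h; exact absurd (Finset.mem_univ _) h
    have N := ((n / (m-1) : ℕ) : ℝ)
    have hinner : ∀ ℓ : Fin m, (∑ i : Fin n, (if σ i ℓ = a j then vhat i (σ i ℓ) else 0))
        = ((n / (m-1) : ℕ) : ℝ) * gval k (ℓ : ℕ) := by
      intro ℓ
      by_cases hℓk : (ℓ : ℕ) ≤ k
      · -- value at this position
        have hval : ∀ i : Fin n, vhat i (σ i ℓ) = gval k (ℓ : ℕ) := by
          intro i
          by_cases hlt : (ℓ : ℕ) < k
          · rw [hvtop i ℓ hlt, gval, if_pos hlt]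
          · have hek : (ℓ : ℕ) = k := by omega
            rw [hvmid i ℓ (Or.inl hek), gval, if_neg (by omega), if_pos hek]
        set s : Fin (m-1) := ⟨((j : ℕ) + (ℓ : ℕ)) % (m-1), Nat.mod_lt _ hM⟩ with hs
        have hcond : ∀ i : Fin n, (σ i ℓ = a j) ↔ (S i = s) := by
          intro i
          rw [L2 i ℓ hℓk]
          constructor
          · intro h; exact Fin.ext h
          · intro h; rw [h]
        calc (∑ i : Fin n, (if σ i ℓ = a j then vhat i (σ i ℓ) else 0))
            = ∑ i : Fin n, (if S i = s then gval k (ℓ : ℕ) else 0) := by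
              apply Finset.sum_congr rfl
              intro i _
              by_cases h : σ i ℓ = a j
              · rw [if_pos h, if_pos ((hcond i).mp h), hval i]
              · rw [if_neg h, if_neg (fun hh => h ((hcond i).mpr hh))]
          _ = ((n / (m-1) : ℕ) : ℝ) * gval k (ℓ : ℕ) := by
              rw [← Finset.sum_filter, Finset.sum_const, hS s, nsmul_eq_mul]
      · -- ℓ ≥ k+1
        by_cases hℓk1 : (ℓ : ℕ) = k + 1
        · have hℓeq : ℓ = ⟨k+1, by omega⟩ := Fin.ext hℓk1
          have hz : ∀ i : Fin n, σ i ℓ ≠ a j := by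
            intro i
            rw [hℓeq, hσo i]
            exact fun h => hao j h.symm
          rw [Finset.sum_eq_zero (fun i _ => if_neg (hz i)), gval,
            if_neg (by omega), if_neg (by omega)]
          ring
        · have hrest : ∀ i : Fin n, vhat i (σ i ℓ) = 0 :=
            fun i => hvrest i ℓ (by omega)
          rw [Finset.sum_eq_zero, gval, if_neg (by omega), if_neg (by omega)]
          · ring
          · intro i _
            rw [hrest i]
            split_ifs <;> rfl
    -- compute SW vhat (a j)
    have hSWa : SW vhat (a j) = ((n / (m-1) : ℕ) : ℝ) * (1 - (1/2:ℝ)^(k+1)) := by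
      rw [key, Finset.sum_congr rfl (fun ℓ _ => hinner ℓ), ← Finset.mul_sum,
        Fin.sum_univ_eq_sum_range, gval_sum k m (by omega)]
    have hSWo : SW vhat o = (n : ℝ) * (1/2:ℝ)^(k+1) := by
      rw [SW]
      have : ∀ i : Fin n, vhat i o = (1/2:ℝ)^(k+1) := by
        intro i
        rw [← hσo i]
        exact hvmid i _ (Or.inr rfl)
      rw [Finset.sum_congr rfl (fun i _ => this i), Finset.sum_const,
        Finset.card_univ, Fintype.card_fin, nsmul_eq_mul]
    rw [hSWo, hSWa]
    have hcast : ((n / (m-1) : ℕ) : ℝ) = (n : ℝ) / ((m : ℝ) - 1) := by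
      rw [Nat.cast_div hdvd (by
        have : ((m:ℝ) - 1) ≠ 0 := by
          have : (4:ℝ) ≤ (m:ℝ) := by exact_mod_cast hm
          linarith
        rwa [Nat.cast_sub (by omega), Nat.cast_one])]
      rw [Nat.cast_sub (by omega), Nat.cast_one]
    rw [hcast]
    have hm1 : (m : ℝ) - 1 ≠ 0 := by
      have : (4:ℝ) ≤ (m:ℝ) := by exact_mod_cast hm
      linarith
    have h2 : (2:ℝ)^(k+1) ≠ 0 := by positivity
    have h3 : (2:ℝ)^(k+1) - 1 ≠ 0 := by
      have : (1:ℝ) < 2^(k+1) := one_lt_pow₀ (by norm_num) (by omega)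
      linarith
    have hhalf : (1/2:ℝ)^(k+1) = 1 / (2:ℝ)^(k+1) := by
      rw [div_pow, one_pow]
    rw [hhalf]
    field_simp
end
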